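/- arXiv:1010.3014 — 2 statements merged into one kernel-verified Lean document; each statement's English description precedes it below -/
import Mathlib

section
/- Let J be a right ℍ-linear map of ℍ^{n+1} satisfying J² = −Id that preserves the quaternionic Hermitian form h_ℍ (i.e., h_ℍ(JX, JY) = h_ℍ(X,Y) for all X, Y). Write h_ℍ = h_ℂ + j·a_ℂ under the identification ℍ^{n+1} ≅ ℂ^{2n+2}. Then the i-eigenspace V and the (−i)-eigenspace V·j of J are orthogonal with respect to h_ℂ and each is isotropic with respect to the complex symplectic form a_ℂ. -/
/-- Right multiplication of a vector of `ℍ^{n+1}` by a quaternion. -/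
noncomputable def rmul {n : ℕ} (x : Fin (n + 1) → Quaternion ℝ) (q : Quaternion ℝ) :
    Fin (n + 1) → Quaternion ℝ := fun l => x l * q

/-- The quaternion `i`. -/
noncomputable def iq : Quaternion ℝ := ⟨0, 1, 0, 0⟩

/-- The quaternion `j`. -/
noncomputable def jq : Quaternion ℝ := ⟨0, 0, 1, 0⟩

/-- The quaternionic Hermitian form of signature `(n,1)`:
`h_ℍ(X,Y) = Σ_{l<n} conj(x_l)·y_l − conj(x_{n+1})·y_{n+1}`. -/
noncomputable def hH (n : ℕ) (X Y : Fin (n + 1) → Quaternion ℝ) : Quaternion ℝ :=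
  ∑ l : Fin (n + 1), if (l : ℕ) < n then star (X l) * Y l else -(star (X l) * Y l)

/-- The first complex component in the decomposition `q = c1 q + j·(c2 q)` of a quaternion,
so that `h_ℍ = h_ℂ + j·a_ℂ` with `h_ℂ = c1 ∘ h_ℍ` and `a_ℂ = c2 ∘ h_ℍ`. -/
noncomputable def c1 (q : Quaternion ℝ) : ℂ := ⟨q.re, q.imI⟩

/-- The second complex component in the decomposition `q = c1 q + j·(c2 q)` of a quaternion. -/
noncomputable def c2 (q : Quaternion ℝ) : ℂ := ⟨q.imJ, -q.imK⟩

/-!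
For eigenvectors `J v = v p`, `J w = w q` of a right `ℍ`-linear `h_ℍ`-isometry,
`h_ℍ(v, w) = p̄ · h_ℍ(v, w) · q`. For `p = q = i` this says `h_ℍ(v, w)` commutes with `i`, so it
is complex and `a_ℂ(v, w) = 0`. Since `J (w j) = (w j)(-i)`, the value `h_ℍ(v, w j)` anticommutes
with `i`, so it lies in `ℂ·j` and `h_ℂ(v, w j) = 0`. Finally `h_ℍ(v j, w j) = j̄ · h_ℍ(v, w) · j`,
whose `j`-component is the complex conjugate of `a_ℂ(v, w)`.
-/

@[simp] lemma iq_re : iq.re = 0 := rfl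
@[simp] lemma iq_imI : iq.imI = 1 := rfl
@[simp] lemma iq_imJ : iq.imJ = 0 := rfl
@[simp] lemma iq_imK : iq.imK = 0 := rfl
@[simp] lemma jq_re : jq.re = 0 := rfl
@[simp] lemma jq_imI : jq.imI = 0 := rfl
@[simp] lemma jq_imJ : jq.imJ = 1 := rfl
@[simp] lemma jq_imK : jq.imK = 0 := rfl

lemma iq_mul_jq : iq * jq = jq * -iq := by
  ext <;> simp [Quaternion.re_mul, Quaternion.imI_mul, Quaternion.imJ_mul, Quaternion.imK_mul]

lemma c2_eq_zero_of_star_iq_mul_mul_iq {q : Quaternion ℝ} (h : star iq * q * iq = q) :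
    c2 q = 0 := by
  obtain ⟨hJ, hK⟩ : -q.imJ = q.imJ ∧ -q.imK = q.imK := by
    simpa [Quaternion.ext_iff, Quaternion.re_mul, Quaternion.imI_mul, Quaternion.imJ_mul,
      Quaternion.imK_mul] using h
  simp only [c2, Complex.ext_iff, Complex.zero_re, Complex.zero_im, neg_eq_zero]
  constructor <;> linarith

lemma c1_eq_zero_of_star_iq_mul_mul_neg_iq {q : Quaternion ℝ} (h : star iq * q * -iq = q) :
    c1 q = 0 := by
  obtain ⟨hre, hI⟩ : -q.re = q.re ∧ -q.imI = q.imI := by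
    simpa [Quaternion.ext_iff, Quaternion.re_mul, Quaternion.imI_mul, Quaternion.imJ_mul,
      Quaternion.imK_mul] using h
  simp only [c1, Complex.ext_iff, Complex.zero_re, Complex.zero_im]
  constructor <;> linarith

lemma c2_star_jq_mul_mul_jq (q : Quaternion ℝ) :
    c2 (star jq * q * jq) = starRingEnd ℂ (c2 q) := by
  simp [c2, Complex.ext_iff, Quaternion.imJ_mul, Quaternion.imK_mul, Quaternion.re_mul,
    Quaternion.imI_mul]

lemma rmul_rmul {n : ℕ} (x : Fin (n + 1) → Quaternion ℝ) (p q : Quaternion ℝ) :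
    rmul (rmul x p) q = rmul x (p * q) := by
  funext l; simp [rmul, mul_assoc]

lemma hH_rmul_rmul (n : ℕ) (X Y : Fin (n + 1) → Quaternion ℝ) (p q : Quaternion ℝ) :
    hH n (rmul X p) (rmul Y q) = star p * hH n X Y * q := by
  simp only [hH, rmul, Finset.mul_sum, Finset.sum_mul]
  refine Finset.sum_congr rfl fun l _ => ?_
  split_ifs <;> simp only [star_mul] <;> noncomm_ring

lemma star_mul_hH_mul_eq_of_rmul_eigen {n : ℕ}
    {J : (Fin (n + 1) → Quaternion ℝ) → (Fin (n + 1) → Quaternion ℝ)}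
    (hpres : ∀ x y, hH n (J x) (J y) = hH n x y) {v w : Fin (n + 1) → Quaternion ℝ}
    {p q : Quaternion ℝ} (hv : J v = rmul v p) (hw : J w = rmul w q) :
    star p * hH n v w * q = hH n v w := by
  rw [← hH_rmul_rmul, ← hv, ← hw, hpres]

theorem eigenspaces_orthogonal_and_isotropic_general (n : ℕ)
    (J : (Fin (n + 1) → Quaternion ℝ) → (Fin (n + 1) → Quaternion ℝ))
    (hlin : ∀ x q, J (rmul x q) = rmul (J x) q)
    (hpres : ∀ x y, hH n (J x) (J y) = hH n x y) :
    ∀ v w, J v = rmul v iq → J w = rmul w iq →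
      c1 (hH n v (rmul w jq)) = 0 ∧
      c2 (hH n v w) = 0 ∧
      c2 (hH n (rmul v jq) (rmul w jq)) = 0 := by
  intro v w hv hw
  have hwj : J (rmul w jq) = rmul (rmul w jq) (-iq) := by
    rw [hlin, hw, rmul_rmul, rmul_rmul, iq_mul_jq]
  have hvw : c2 (hH n v w) = 0 :=
    c2_eq_zero_of_star_iq_mul_mul_iq (star_mul_hH_mul_eq_of_rmul_eigen hpres hv hw)
  refine ⟨c1_eq_zero_of_star_iq_mul_mul_neg_iq (star_mul_hH_mul_eq_of_rmul_eigen hpres hv hwj),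
    hvw, ?_⟩
  rw [hH_rmul_rmul, c2_star_jq_mul_mul_jq, hvw, map_zero]

/-- If `J` is a right `ℍ`-linear complex structure preserving the quaternionic Hermitian form
`h_ℍ = h_ℂ + j·a_ℂ`, then the `i`-eigenspace `V` and the `(−i)`-eigenspace `V·j` of `J`
are `h_ℂ`-orthogonal, and each is isotropic for the complex symplectic form `a_ℂ`. -/
theorem eigenspaces_orthogonal_and_isotropic (n : ℕ)
    (J : (Fin (n + 1) → Quaternion ℝ) → (Fin (n + 1) → Quaternion ℝ))
    (hadd : ∀ x y, J (x + y) = J x + J y)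
    (hlin : ∀ x q, J (rmul x q) = rmul (J x) q)
    (hsq : ∀ x, J (J x) = -x)
    (hpres : ∀ x y, hH n (J x) (J y) = hH n x y) :
    ∀ v w, J v = rmul v iq → J w = rmul w iq →
      c1 (hH n v (rmul w jq)) = 0 ∧
      c2 (hH n v w) = 0 ∧
      c2 (hH n (rmul v jq) (rmul w jq)) = 0 :=
  eigenspaces_orthogonal_and_isotropic_general n J hlin hpres
end

section
/- Let W be an m-dimensional complex inner product space and ω its Kähler (fundamental) 2-form. Let β be a real (1,1)-form on W with eigenvalues λ_1,…,λ_m with respect to ω, satisfying 0 ≤ β ≤ ω (all eigenvalues in [0,1]), with m ≥ 2. If β² ∧ ω^{m−2} = ω^m (as top forms), then β = ω. -/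
open scoped InnerProductSpace

lemma card_lt_pairs_mul_two (m : ℕ) :
    (Finset.univ.filter (fun p : Fin m × Fin m => p.1 < p.2)).card * 2 = m * (m - 1) := by
  rw [Finset.card_filter, Fintype.sum_prod_type]
  have h1 : ∀ i : Fin m, (∑ j : Fin m, if i < j then 1 else 0) = m - 1 - (i : ℕ) := by
    intro i
    rw [← Finset.card_filter]
    have : Finset.univ.filter (fun j : Fin m => i < j) = Finset.Ioi i := by
      ext j; simp
    rw [this, Fin.card_Ioi]
  simp_rw [h1]
  rw [Fin.sum_univ_eq_sum_range (fun k => m - 1 - k) m,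
    Finset.sum_range_reflect (fun i => i) m, Finset.sum_range_id_mul_two]

/-- Real `(1,1)`-forms `β` with `0 ≤ β ≤ ω` on an `m`-dimensional complex inner product
space correspond to self-adjoint operators `φ` with eigenvalues in `[0,1]` (`β = ω` iff
`φ = Id`), and `β² ∧ ω^{m−2} = (2/(m(m−1)))·tr(Λ²φ)·ω^m` where
`tr(Λ²φ) = Σ_{i<j} λ_i λ_j`.  If `β² ∧ ω^{m−2} = ω^m` then `β = ω`, i.e. `φ = Id`. -/
theorem form_equality_implies_identity
    {W : Type*} [NormedAddCommGroup W] [InnerProductSpace ℂ W] [FiniteDimensional ℂ W]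
    {m : ℕ} (hm : Module.finrank ℂ W = m) (hm2 : 2 ≤ m)
    (φ : W →ₗ[ℂ] W) (hsym : φ.IsSymmetric)
    (hpos : ∀ x : W, 0 ≤ (inner ℂ (φ x) x : ℂ).re)
    (hle : ∀ x : W, (inner ℂ (φ x) x : ℂ).re ≤ ‖x‖ ^ 2)
    (heq : (2 / ((m : ℝ) * (m - 1))) *
        ∑ p ∈ Finset.univ.filter (fun p : Fin m × Fin m => p.1 < p.2),
          hsym.eigenvalues hm p.1 * hsym.eigenvalues hm p.2 = 1) :
    φ = LinearMap.id := by
  set μ := hsym.eigenvalues hm with hμ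
  set e := hsym.eigenvectorBasis hm with he
  have hunit : ∀ i, ‖e i‖ = 1 := fun i => e.orthonormal.1 i
  have hinner : ∀ i, (inner ℂ (φ (e i)) (e i) : ℂ).re = μ i := by
    intro i
    rw [hsym.apply_eigenvectorBasis hm i, inner_smul_left]
    simp [← he, ← hμ, inner_self_eq_norm_sq_to_K, hunit]
  have hμ0 : ∀ i, 0 ≤ μ i := fun i => by rw [← hinner i]; exact hpos (e i)
  have hμ1 : ∀ i, μ i ≤ 1 := fun i => by
    have := hle (e i); rw [hinner i, hunit i] at this; simpa using this
  -- translate heq into sum equality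
  set S := Finset.univ.filter (fun p : Fin m × Fin m => p.1 < p.2) with hS
  have hmr : (0 : ℝ) < (m : ℝ) * ((m : ℝ) - 1) := by
    have : (2 : ℝ) ≤ (m : ℝ) := by exact_mod_cast hm2
    nlinarith
  have hcard : (S.card : ℝ) * 2 = (m : ℝ) * ((m : ℝ) - 1) := by
    have h := card_lt_pairs_mul_two m
    have : ((S.card * 2 : ℕ) : ℝ) = ((m * (m - 1) : ℕ) : ℝ) := by rw [hS, h]
    push_cast [Nat.cast_sub (by omega : 1 ≤ m)] at this
    linarith
  have hsum : ∑ p ∈ S, μ p.1 * μ p.2 = (S.card : ℝ) := by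
    have h2 : ∑ p ∈ S, μ p.1 * μ p.2 = (m : ℝ) * ((m : ℝ) - 1) / 2 := by
      field_simp at heq
      have hm1 : (m : ℝ) - 1 ≠ 0 := by
        have : (2 : ℝ) ≤ (m : ℝ) := by exact_mod_cast hm2
        linarith
      rw [div_eq_iff hm1] at heq
      linarith
    rw [h2]; linarith
  -- each term equals 1
  have hterm : ∀ p ∈ S, μ p.1 * μ p.2 = 1 := by
    intro p hp
    by_contra hne
    have hlt : μ p.1 * μ p.2 < 1 :=
      lt_of_le_of_ne (mul_le_one₀ (hμ1 p.1) (hμ0 p.2) (hμ1 p.2)) hne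
    have : ∑ q ∈ S, μ q.1 * μ q.2 < ∑ _q ∈ S, (1 : ℝ) :=
      Finset.sum_lt_sum (fun q _ => mul_le_one₀ (hμ1 q.1) (hμ0 q.2) (hμ1 q.2)) ⟨p, hp, hlt⟩
    rw [Finset.sum_const, nsmul_eq_mul, mul_one, hsum] at this
    exact lt_irrefl _ this
  -- hence every eigenvalue is 1
  have hμeq : ∀ i, μ i = 1 := by
    intro i
    obtain ⟨j, hij⟩ : ∃ j : Fin m, i ≠ j ∧ (i < j ∨ j < i) := by
      rcases lt_or_ge (i : ℕ) (m - 1) with h | h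
      · exact ⟨⟨(i : ℕ) + 1, by omega⟩, by
          constructor
          · intro hc; exact absurd (congrArg Fin.val hc) (by simp)
          · left; exact Fin.lt_def.mpr (by simp)⟩
      · refine ⟨⟨0, by omega⟩, ?_, ?_⟩
        · intro hc
          have := congrArg Fin.val hc
          simp at this; omega
        · right; exact Fin.lt_def.mpr (by simp; omega)
    obtain ⟨hne, hlt | hlt⟩ := hij.imp id id
    · have h1 : μ i * μ j = 1 := hterm (i, j) (by simp [hS, hlt])
      nlinarith [hμ1 i, hμ1 j, hμ0 i, hμ0 j]
    · have h1 : μ j * μ i = 1 := hterm (j, i) (by simp [hS, hlt])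
      nlinarith [hμ1 i, hμ1 j, hμ0 i, hμ0 j]
  -- conclude φ = id on the eigenbasis
  apply e.toBasis.ext
  intro i
  rw [OrthonormalBasis.coe_toBasis]
  rw [show φ (e i) = ((μ i : ℝ) : ℂ) • e i from hsym.apply_eigenvectorBasis hm i]
  rw [hμeq i]
  simp
end
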